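/- Variance of the swapped vector: if (v, ṽ) has covariance structure Cov(v)=Cov(ṽ)=Σ, Cov(v,ṽ)=Σ−diag(s), then for any S ⊆ {1,…,d} the vector w defined by w_j = ṽ_j for j ∈ S and w_j = v_j otherwise satisfies Cov(w) = Σ; i.e., each partially swapped vector has exactly the same covariance matrix Σ. -/

import Mathlib

open MeasureTheory Matrix

/-- The (cross-)covariance matrix of two random vectors. -/
noncomputable def covMatrix {Ω : Type*} [MeasurableSpace Ω] (μ : Measure Ω)
    {n m : ℕ} (X : Ω → Fin n → ℝ) (Y : Ω → Fin m → ℝ) : Matrix (Fin n) (Fin m) ℝ :=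
  fun i j => ∫ ω, (X ω i - ∫ ω', X ω' i ∂μ) * (Y ω j - ∫ ω', Y ω' j ∂μ) ∂μ

/-! Entry `(i, j)` of the covariance of the swapped vector is entry `(i, j)` of `Cov v`, `Cov ṽ`,
`Cov(v, ṽ)` or `Cov(ṽ, v) = Cov(v, ṽ)ᵀ`. The cross blocks are only used off the diagonal, where
`diag s` vanishes, so every entry is that of `Σ` (using its symmetry for `Cov(ṽ, v)`). -/

section

variable {Ω : Type*} [MeasurableSpace Ω] (μ : Measure Ω)

theorem covMatrix_transpose {n m : ℕ} (X : Ω → Fin n → ℝ) (Y : Ω → Fin m → ℝ) :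
    (covMatrix μ X Y)ᵀ = covMatrix μ Y X := by
  ext i j
  simp only [transpose_apply, covMatrix, mul_comm]

theorem covMatrix_ite_apply {n : ℕ} (S T : Finset (Fin n)) (X Y : Ω → Fin n → ℝ)
    (i j : Fin n) :
    covMatrix μ (fun ω k => if k ∈ S then Y ω k else X ω k)
        (fun ω k => if k ∈ T then Y ω k else X ω k) i j =
      (if i ∈ S then (if j ∈ T then covMatrix μ Y Y else covMatrix μ Y X)
        else (if j ∈ T then covMatrix μ X Y else covMatrix μ X X)) i j := by
  by_cases hi : i ∈ S <;> by_cases hj : j ∈ T <;> simp [covMatrix, hi, hj]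

end

theorem swapped_vector_covariance_general
    {Ω : Type*} [MeasurableSpace Ω] (μ : Measure Ω)
    {d : ℕ} (v vtil : Ω → Fin d → ℝ)
    (Sig : Matrix (Fin d) (Fin d) ℝ) (hSym : Sig.IsSymm) (s : Fin d → ℝ)
    (hcov : covMatrix μ v v = Sig) (hcovtil : covMatrix μ vtil vtil = Sig)
    (hcross : covMatrix μ v vtil = Sig - Matrix.diagonal s) :
    ∀ S : Finset (Fin d),
      covMatrix μ (fun ω i => if i ∈ S then vtil ω i else v ω i)
        (fun ω i => if i ∈ S then vtil ω i else v ω i) = Sig := by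
  intro S
  have hcross' : covMatrix μ vtil v = Sig - diagonal s := by
    rw [← covMatrix_transpose, hcross, transpose_sub, hSym.eq, diagonal_transpose]
  ext i j
  rw [covMatrix_ite_apply]
  by_cases hi : i ∈ S <;> by_cases hj : j ∈ S
  · simp [hi, hj, hcovtil]
  · simp [hi, hj, hcross', diagonal_apply_ne s (ne_of_mem_of_not_mem hi hj)]
  · simp [hi, hj, hcross, diagonal_apply_ne s ((ne_of_mem_of_not_mem hj hi).symm)]
  · simp [hi, hj, hcov]

/-- If zero-mean `(v, vtil)` have `Cov v = Cov vtil = Σ` (symmetric) and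
`Cov(v, vtil) = Σ − diag s`, then for any subset `S` the partially swapped vector,
taking coordinates from `vtil` on `S` and from `v` off `S`, has covariance exactly `Σ`. -/
theorem swapped_vector_covariance
    {Ω : Type*} [MeasurableSpace Ω] (μ : Measure Ω) [IsProbabilityMeasure μ]
    {d : ℕ} (v vtil : Ω → Fin d → ℝ)
    (hv : ∀ i, MemLp (fun ω => v ω i) 2 μ)
    (hvtil : ∀ i, MemLp (fun ω => vtil ω i) 2 μ)
    (hvmean : ∀ i, ∫ ω, v ω i ∂μ = 0) (hvtilmean : ∀ i, ∫ ω, vtil ω i ∂μ = 0)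
    (Sig : Matrix (Fin d) (Fin d) ℝ) (hSym : Sig.IsSymm) (s : Fin d → ℝ)
    (hcov : covMatrix μ v v = Sig) (hcovtil : covMatrix μ vtil vtil = Sig)
    (hcross : covMatrix μ v vtil = Sig - Matrix.diagonal s) :
    ∀ S : Finset (Fin d),
      covMatrix μ (fun ω i => if i ∈ S then vtil ω i else v ω i)
        (fun ω i => if i ∈ S then vtil ω i else v ω i) = Sig :=
  swapped_vector_covariance_general μ v vtil Sig hSym s hcov hcovtil hcross
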